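/- arXiv:0704.2863 — 2 statements merged into one kernel-verified Lean document; each statement's English description precedes it below -/
import Mathlib

section
/- The birational transformation S1 : (x,y,z,w) ↦ (x + α₁/y, y, z, w) with parameter change (α₁, α₂) ↦ (−α₁, α₂) preserves the Hamiltonian H = H_II(x,y,t;α₁) + H_II(z,w,t;α₂) + a·y·w, where H_II(x,y,t;α) = a₁x²y + a₂y²/2 + a₃ty + a₁αx. That is, substituting x ↦ x + α₁/y and α₁ ↦ −α₁ into H yields the same rational function of (x,y,z,w,t). -/
/-- Hamiltonian of the second-order Painlevé II system. -/
noncomputable def HII (a₁ a₂ a₃ x y t α : ℂ) : ℂ :=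
  a₁ * x ^ 2 * y + a₂ * y ^ 2 / 2 + a₃ * t * y + a₁ * α * x

/-- The coupled Hamiltonian H = H_II(x,y,t;α₁) + H_II(z,w,t;α₂) + a·y·w. -/
noncomputable def Hcoupled (a a₁ a₂ a₃ x y z w t α β : ℂ) : ℂ :=
  HII a₁ a₂ a₃ x y t α + HII a₁ a₂ a₃ z w t β + a * y * w

/-- Expanding `a₁ (x + α/y)² y` produces `a₁ x² y + 2 a₁ α x + a₁ α²/y`; the flipped linear term
`-a₁ α (x + α/y)` cancels the last summand and half of the middle one. -/
theorem HII_shift_neg (a₁ a₂ a₃ x y t α : ℂ) (hy : y ≠ 0) :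
    HII a₁ a₂ a₃ (x + α / y) y t (-α) = HII a₁ a₂ a₃ x y t α := by
  unfold HII
  field_simp
  ring

theorem S1_preserves_H_general (a a₁ a₂ a₃ α₁ α₂ x y z w t : ℂ)
    (hy : y ≠ 0) :
    Hcoupled a a₁ a₂ a₃ (x + α₁ / y) y z w t (-α₁) α₂ =
    Hcoupled a a₁ a₂ a₃ x y z w t α₁ α₂ := by
  rw [Hcoupled, Hcoupled, HII_shift_neg a₁ a₂ a₃ x y t α₁ hy]

/-- the transformation S₁ : (x,y,z,w) ↦ (x + α₁/y, y, z, w),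
(α₁,α₂) ↦ (−α₁,α₂) preserves the Hamiltonian H. -/
theorem S1_preserves_H (a a₁ a₂ a₃ α₁ α₂ x y z w t : ℂ)
    (ha₁ : a₁ ≠ 0) (ha₂ : a₂ ≠ 0) (ha₃ : a₃ ≠ 0) (hy : y ≠ 0) :
    Hcoupled a a₁ a₂ a₃ (x + α₁ / y) y z w t (-α₁) α₂ =
    Hcoupled a a₁ a₂ a₃ x y z w t α₁ α₂ :=
  S1_preserves_H_general a a₁ a₂ a₃ α₁ α₂ x y z w t hy
end

section
/- The symplectic change of variables (X, Y, Z, W) = (x, −t − w − x² + y, −w, x + z) transforms the system dx/dt = −2x² + 4y − 3w − 2t, dy/dt = 4xy + 2α₂, dz/dt = z² + 2w − 3y + t, dw/dt = −2zw − α₃ into the system dX/dt = 2X² + 4Y − Z + 2t, dY/dt = −4XY − 2ZW − 2α₁, dZ/dt = −2ZW + 2XZ + α₃, dW/dt = W² − 2XW + Y, where 2α₁ + 2α₂ + α₃ = 1. -/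
/-! Each new coordinate is a polynomial in `t` and the old coordinates, so its derivative comes
from the chain rule, and after substituting the first system both sides agree as polynomials,
except for the constant term of `dY/dt`: it is `-1 + 2α₂ + α₃` on one side and `-2α₁` on the
other, which agree because `2α₁ + 2α₂ + α₃ = 1`. -/

theorem HasDerivAt.neg_id_sub_sub_sq_add {𝕜 : Type*} [NontriviallyNormedField 𝕜]
    {x y w : 𝕜 → 𝕜} {x' y' w' t : 𝕜} (hx : HasDerivAt x x' t) (hy : HasDerivAt y y' t)
    (hw : HasDerivAt w w' t) :
    HasDerivAt (fun s => -s - w s - x s ^ 2 + y s) (-1 - w' - 2 * x t * x' + y') t :=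
  ((((hasDerivAt_id' t).fun_neg.fun_sub hw).fun_sub (hx.fun_pow 2)).fun_add hy).congr_deriv
    (by norm_num)

/-- the symplectic change of variables
(X,Y,Z,W) = (x, −t−w−x²+y, −w, x+z) maps solutions of the first system
to solutions of the second. -/
theorem phi2_transforms_system (α₁ α₂ α₃ : ℂ)
    (hrel : 2 * α₁ + 2 * α₂ + α₃ = 1)
    (x y z w : ℂ → ℂ)
    (hx : ∀ t, HasDerivAt x (-2 * (x t) ^ 2 + 4 * y t - 3 * w t - 2 * t) t)
    (hy : ∀ t, HasDerivAt y (4 * x t * y t + 2 * α₂) t)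
    (hz : ∀ t, HasDerivAt z ((z t) ^ 2 + 2 * w t - 3 * y t + t) t)
    (hw : ∀ t, HasDerivAt w (-2 * z t * w t - α₃) t) :
    let X : ℂ → ℂ := fun t => x t
    let Y : ℂ → ℂ := fun t => -t - w t - (x t) ^ 2 + y t
    let Z : ℂ → ℂ := fun t => -w t
    let W : ℂ → ℂ := fun t => x t + z t
    (∀ t, HasDerivAt X (2 * (X t) ^ 2 + 4 * Y t - Z t + 2 * t) t) ∧
    (∀ t, HasDerivAt Y (-4 * X t * Y t - 2 * Z t * W t - 2 * α₁) t) ∧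
    (∀ t, HasDerivAt Z (-2 * Z t * W t + 2 * X t * Z t + α₃) t) ∧
    (∀ t, HasDerivAt W ((W t) ^ 2 - 2 * X t * W t + Y t) t) := by
  intro X Y Z W
  refine ⟨fun t => ?_, fun t => ?_, fun t => ?_, fun t => ?_⟩
  · exact (hx t).congr_deriv (by ring)
  · exact ((hx t).neg_id_sub_sub_sq_add (hy t) (hw t)).congr_deriv
      (by linear_combination hrel)
  · exact (hw t).neg.congr_deriv (by ring)
  · exact ((hx t).add (hz t)).congr_deriv (by ring)
end
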